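/- Cross-ratio via quasi-Plücker coordinates (Proposition 2.7): let x, y, z, t ∈ R² and suppose there exist α, β, γ, κ ∈ R with α ≠ 0, β ≠ 0, γ ≠ 0 such that t = x·α + y·β and z = x·α·γ + y·β·γ·κ (componentwise, with scalars acting on the right). Assume the 2×2 matrix with columns x and y is invertible and that κ(x, y, z, t) is defined. Then κ = κ(x, y, z, t), i.e. κ = (z₁ − y₁·y₂⁻¹·z₂)⁻¹·(t₁ − y₁·y₂⁻¹·t₂)·(t₁ − x₁·x₂⁻¹·t₂)⁻¹·(z₁ − x₁·x₂⁻¹·z₂). -/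
import Mathlib


/-- The non-commutative cross-ratio `κ(x, y, z, t)` of four column vectors in `R²`:
`κ(x,y,z,t) = (z₁ − y₁y₂⁻¹z₂)⁻¹ (t₁ − y₁y₂⁻¹t₂) (t₁ − x₁x₂⁻¹t₂)⁻¹ (z₁ − x₁x₂⁻¹z₂)`. -/
noncomputable def ncr {R : Type*} [DivisionRing R] (x y z t : Fin 2 → R) : R :=
  (z 0 - y 0 * (y 1)⁻¹ * z 1)⁻¹ * (t 0 - y 0 * (y 1)⁻¹ * t 1) *
    (t 0 - x 0 * (x 1)⁻¹ * t 1)⁻¹ * (z 0 - x 0 * (x 1)⁻¹ * z 1)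

/-- `κ(x, y, z, t)` is said to be defined when `x₂`, `y₂`, `z₁ − y₁y₂⁻¹z₂` and
`t₁ − x₁x₂⁻¹t₂` are all nonzero. -/
def ncrDefined {R : Type*} [DivisionRing R] (x y z t : Fin 2 → R) : Prop :=
  x 1 ≠ 0 ∧ y 1 ≠ 0 ∧ z 0 - y 0 * (y 1)⁻¹ * z 1 ≠ 0 ∧ t 0 - x 0 * (x 1)⁻¹ * t 1 ≠ 0

/-- Cross-ratio via quasi-Plücker coordinates: if `t = x·α + y·β` and
`z = x·α·γ + y·β·γ·κ` with `α, β, γ` nonzero, the matrix `(x | y)` invertible, and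
`κ(x,y,z,t)` defined, then `κ = κ(x,y,z,t)`. -/
theorem stmt_5 {R : Type*} [DivisionRing R] (x y z t : Fin 2 → R) (α β γ κ : R)
    (hα : α ≠ 0) (hβ : β ≠ 0) (hγ : γ ≠ 0)
    (ht : ∀ r, t r = x r * α + y r * β)
    (hz : ∀ r, z r = x r * (α * γ) + y r * (β * γ * κ))
    (hM : IsUnit (Matrix.of ![![x 0, y 0], ![x 1, y 1]]))
    (hdef : ncrDefined x y z t) :
    κ = ncr x y z t := by
  obtain ⟨hx1, hy1, hz0, ht0⟩ := hdef
  set A := x 0 - y 0 * (y 1)⁻¹ * x 1 with hAdef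
  set B := y 0 - x 0 * (x 1)⁻¹ * y 1 with hBdef
  have hA1 : z 0 - y 0 * (y 1)⁻¹ * z 1 = A * (α * γ) := by
    rw [hz 0, hz 1]
    simp only [mul_add, ← mul_assoc, inv_mul_cancel_right₀ hy1, hAdef]
    noncomm_ring
  have hA2 : t 0 - y 0 * (y 1)⁻¹ * t 1 = A * α := by
    rw [ht 0, ht 1]
    simp only [mul_add, ← mul_assoc, inv_mul_cancel_right₀ hy1, hAdef]
    noncomm_ring
  have hB1 : z 0 - x 0 * (x 1)⁻¹ * z 1 = B * (β * γ * κ) := by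
    rw [hz 0, hz 1]
    simp only [mul_add, ← mul_assoc, inv_mul_cancel_right₀ hx1, hBdef]
    noncomm_ring
  have hB2 : t 0 - x 0 * (x 1)⁻¹ * t 1 = B * β := by
    rw [ht 0, ht 1]
    simp only [mul_add, ← mul_assoc, inv_mul_cancel_right₀ hx1, hBdef]
    noncomm_ring
  have hA : A ≠ 0 := left_ne_zero_of_mul (hA1 ▸ hz0)
  have hB : B ≠ 0 := left_ne_zero_of_mul (hB2 ▸ ht0)
  rw [ncr, hA1, hA2, hB1, hB2]
  simp only [mul_inv_rev, mul_assoc, inv_mul_cancel_left₀ hA, inv_mul_cancel_left₀ hB,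
    inv_mul_cancel_left₀ hα, inv_mul_cancel_left₀ hβ, inv_mul_cancel_left₀ hγ]
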